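/- Every element of L₁ ∩ L₂ (from the PCP construction) has first component of the form s^n for some index word s that is either empty or a PCP solution: if (u, v, w) ∈ L₁ ∩ L₂ with u = i₁⋯i_α, then v = x_{i₁}⋯x_{i_α} = y_{j₁}⋯y_{j_α} where u also equals j₁⋯j_α, hence x_{i₁}⋯x_{i_α} = y_{i₁}⋯y_{i_α}; i.e., any nonempty u appearing in the intersection gives a PCP solution. -/

import Mathlib

/-- The word x_{i₁}⋯x_{i_α} obtained by concatenating the words indexed by `u`. -/
def prodOf {α : Type} {m : ℕ} (x : Fin m → List α) (u : List (Fin m)) : List α :=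
  (u.map x).flatten

/-- L₁ = {(i₁⋯i_α, x_{i₁}⋯x_{i_α}, y_{i₁}⋯y_{i_α} # w̃) : α ≥ 0, w̃ ∈ X*}. -/
def PCPL1 {α : Type} {m : ℕ} (x y : Fin m → List α) :
    Set (List (Fin m) × List α × List (Option α)) :=
  {t | ∃ (u l : List (Fin m)),
    t = (u, prodOf x u, (prodOf y u).map some ++ [none] ++ (prodOf x l).map some)}

/-- L₂ = {(j₁⋯j_β, y_{j₁}⋯y_{j_β}, ỹ # x_{j₁}⋯x_{j_β}) : β ≥ 0, ỹ ∈ Y*}. -/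
def PCPL2 {α : Type} {m : ℕ} (x y : Fin m → List α) :
    Set (List (Fin m) × List α × List (Option α)) :=
  {t | ∃ (u l : List (Fin m)),
    t = (u, prodOf y u, (prodOf y l).map some ++ [none] ++ (prodOf x u).map some)}

theorem PCPL1.snd_eq_prodOf {α : Type} {m : ℕ} {x y : Fin m → List α}
    {t : List (Fin m) × List α × List (Option α)} (ht : t ∈ PCPL1 x y) :
    t.2.1 = prodOf x t.1 := by
  obtain ⟨u, l, rfl⟩ := ht
  rfl

theorem PCPL2.snd_eq_prodOf {α : Type} {m : ℕ} {x y : Fin m → List α}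
    {t : List (Fin m) × List α × List (Option α)} (ht : t ∈ PCPL2 x y) :
    t.2.1 = prodOf y t.1 := by
  obtain ⟨u, l, rfl⟩ := ht
  rfl

theorem pcp_intersection_gives_solution_general {α : Type} {m : ℕ} (x y : Fin m → List α)
    (u : List (Fin m)) (v : List α) (w : List (Option α))
    (h : (u, v, w) ∈ PCPL1 x y ∩ PCPL2 x y) :
    prodOf x u = prodOf y u :=
  (PCPL1.snd_eq_prodOf h.1).symm.trans (PCPL2.snd_eq_prodOf h.2)

/-- Any triple (u, v, w) in L₁ ∩ L₂ with nonempty index word u yields a PCP solution: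
x_{i₁}⋯x_{i_α} = y_{i₁}⋯y_{i_α}. -/
theorem pcp_intersection_gives_solution {α : Type} {m : ℕ} (x y : Fin m → List α)
    (u : List (Fin m)) (v : List α) (w : List (Option α))
    (hu : u ≠ []) (h : (u, v, w) ∈ PCPL1 x y ∩ PCPL2 x y) :
    prodOf x u = prodOf y u :=
  pcp_intersection_gives_solution_general x y u v w h
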